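/- For the trapezoid P with vertices (0,0), (α+k,0), (α,1), (0,1), k a nonnegative integer, the barycenter of the boundary with respect to lattice length measure is ((α² + α(k+1) + k(k+1)/2)/(2+2α+k), (α+1)/(2+2α+k)). -/

import Mathlib

open MeasureTheory

/-- The lattice length of the segment from `v` to `w`: the value `|u|` where
`w - v = u • (p, q)` for a primitive (coprime) integer vector `(p, q)`. -/
noncomputable def latticeLength (v w : ℝ × ℝ) : ℝ :=
  sInf {r : ℝ | ∃ (u : ℝ) (p q : ℤ), IsCoprime p q ∧
    w - v = u • ((p : ℝ), (q : ℝ)) ∧ r = |u|}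

/-- Integral of `f` over the segment from `v` to `w` with respect to the lattice
length measure dλ (equal to `latticeLength v w` times normalized length measure). -/
noncomputable def edgeInt (v w : ℝ × ℝ) (f : ℝ × ℝ → ℝ) : ℝ :=
  latticeLength v w * ∫ t in (0:ℝ)..(1:ℝ), f (v + t • (w - v))

/-- The trapezoid with vertices (0,0), (α+k,0), (α,1), (0,1). -/
noncomputable def trap (α k : ℝ) : Set (ℝ × ℝ) :=
  convexHull ℝ ({(0, 0), (α + k, 0), (α, 1), (0, 1)} : Set (ℝ × ℝ))

noncomputable def trapArea (α k : ℝ) : ℝ := (volume (trap α k)).toReal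

noncomputable def trapPerim (α k : ℝ) : ℝ :=
  latticeLength (0, 0) (α + k, 0) + latticeLength (α + k, 0) (α, 1) +
    latticeLength (α, 1) (0, 1) + latticeLength (0, 1) (0, 0)

noncomputable def trapCentroid (α k : ℝ) : ℝ × ℝ :=
  ((∫ p in trap α k, p.1) / trapArea α k, (∫ p in trap α k, p.2) / trapArea α k)

noncomputable def trapBdryInt (α k : ℝ) (f : ℝ × ℝ → ℝ) : ℝ :=
  edgeInt (0, 0) (α + k, 0) f + edgeInt (α + k, 0) (α, 1) f +
    edgeInt (α, 1) (0, 1) f + edgeInt (0, 1) (0, 0) f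

noncomputable def trapBdryBary (α k : ℝ) : ℝ × ℝ :=
  (trapBdryInt α k (fun p => p.1) / trapPerim α k,
   trapBdryInt α k (fun p => p.2) / trapPerim α k)

/-- The vector 𝔇 joining the interior barycenter to the boundary barycenter. -/
noncomputable def trapD (α k : ℝ) : ℝ × ℝ := trapBdryBary α k - trapCentroid α k

/-- The moment-of-inertia matrix Π of the trapezoid about its barycenter. -/
noncomputable def trapPi (α k : ℝ) : Matrix (Fin 2) (Fin 2) ℝ :=
  !![∫ p in trap α k, (p.1 - (trapCentroid α k).1) * (p.1 - (trapCentroid α k).1),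
     ∫ p in trap α k, (p.1 - (trapCentroid α k).1) * (p.2 - (trapCentroid α k).2);
     ∫ p in trap α k, (p.2 - (trapCentroid α k).2) * (p.1 - (trapCentroid α k).1),
     ∫ p in trap α k, (p.2 - (trapCentroid α k).2) * (p.2 - (trapCentroid α k).2)]

/-!
Each edge of the trapezoid is a nonnegative multiple of a primitive integer vector, and that
multiple is its lattice length: `α + k`, `1`, `α`, `1` going around, so the perimeter is
`2 + 2α + k`. Integrating a coordinate along an edge gives its lattice length times the
coordinate of its midpoint, and summing the four edges gives the two numerators.
-/

lemma IsCoprime.exists_eq_smul_of_mul_eq_mul {p q p' q' : ℤ} (hpq : IsCoprime p q)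
    (h : p * q' = p' * q) : ∃ c : ℤ, p' = c * p ∧ q' = c * q := by
  obtain ⟨a, b, hab⟩ := hpq
  refine ⟨a * p' + b * q', ?_, ?_⟩
  · linear_combination (-p') * hab - b * h
  · linear_combination (-q') * hab + a * h

lemma IsCoprime.isUnit_of_mul_mul {c p q : ℤ} (h : IsCoprime (c * p) (c * q)) : IsUnit c :=
  isCoprime_self.mp (h.of_mul_left_left.of_mul_right_left)

lemma IsCoprime.intCast_prod_ne_zero {p q : ℤ} (hpq : IsCoprime p q) :
    ((p : ℝ), (q : ℝ)) ≠ 0 := by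
  intro h
  simp only [Prod.mk_eq_zero, Int.cast_eq_zero] at h
  obtain ⟨rfl, rfl⟩ := h
  exact not_isCoprime_zero_zero hpq

/-- Two primitive vectors spanning the same line agree up to sign, so the set in the `sInf`
defining `latticeLength` is a singleton. -/
lemma latticeLength_eq_abs {v w : ℝ × ℝ} {u : ℝ} {p q : ℤ} (hpq : IsCoprime p q)
    (h : w - v = u • ((p : ℝ), (q : ℝ))) : latticeLength v w = |u| := by
  suffices hset : {r : ℝ | ∃ (u : ℝ) (p q : ℤ), IsCoprime p q ∧
      w - v = u • ((p : ℝ), (q : ℝ)) ∧ r = |u|} = {|u|} by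
    rw [latticeLength, hset, csInf_singleton]
  ext r
  refine ⟨?_, fun hr => ⟨u, p, q, hpq, h, hr⟩⟩
  rintro ⟨u', p', q', hpq', h', rfl⟩
  rw [h] at h'
  rcases eq_or_ne u' 0 with rfl | hu'
  · rw [zero_smul, smul_eq_zero] at h'
    simp [h'.resolve_right hpq.intCast_prod_ne_zero]
  have hcross : p * q' = p' * q := by
    simp only [Prod.smul_mk, smul_eq_mul, Prod.mk.injEq] at h'
    have : u' * (p * q' : ℝ) = u' * (p' * q) := by
      linear_combination (q : ℝ) * h'.1 - (p : ℝ) * h'.2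
    exact_mod_cast mul_left_cancel₀ hu' this
  obtain ⟨c, rfl, rfl⟩ := hpq.exists_eq_smul_of_mul_eq_mul hcross
  have hc : IsUnit c := hpq'.isUnit_of_mul_mul
  have hu : u = u' * c := by
    refine smul_left_injective ℝ hpq.intCast_prod_ne_zero ?_
    simp only [h', Int.cast_mul, Prod.smul_mk, smul_eq_mul]
    ext <;> ring
  rcases Int.isUnit_iff.mp hc with rfl | rfl <;> simp [hu]

lemma integral_unitInterval_affine (a b : ℝ) : ∫ t in (0:ℝ)..1, (a + t * b) = a + b / 2 := by
  rw [intervalIntegral.integral_add intervalIntegrable_const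
      (intervalIntegral.intervalIntegrable_id.mul_const b), intervalIntegral.integral_const,
    intervalIntegral.integral_mul_const, integral_id, smul_eq_mul]
  ring

lemma edgeInt_fst (v w : ℝ × ℝ) :
    edgeInt v w (fun p => p.1) = latticeLength v w * ((v.1 + w.1) / 2) := by
  simp only [edgeInt, Prod.fst_add, Prod.smul_fst, Prod.fst_sub, smul_eq_mul,
    integral_unitInterval_affine]
  ring

lemma edgeInt_snd (v w : ℝ × ℝ) :
    edgeInt v w (fun p => p.2) = latticeLength v w * ((v.2 + w.2) / 2) := by
  simp only [edgeInt, Prod.snd_add, Prod.smul_snd, Prod.snd_sub, smul_eq_mul,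
    integral_unitInterval_affine]
  ring

theorem trap_bdry_bary (α : ℝ) (k : ℕ) (hα : 0 < α) :
    trapBdryBary α k =
      ((α ^ 2 + α * (k + 1) + k * (k + 1) / 2) / (2 + 2 * α + k),
        (α + 1) / (2 + 2 * α + k)) := by
  have hbottom : latticeLength (0, 0) (α + k, 0) = α + k := by
    rw [latticeLength_eq_abs (u := α + k) (q := 0) isCoprime_one_left (by ext <;> simp),
      abs_of_pos (by positivity)]
  have hslant : latticeLength (α + k, 0) (α, 1) = 1 := by
    rw [latticeLength_eq_abs (u := 1) (p := -k) isCoprime_one_right (by ext <;> simp), abs_one]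
  have htop : latticeLength (α, 1) (0, 1) = α := by
    rw [latticeLength_eq_abs (u := -α) (q := 0) isCoprime_one_left (by ext <;> simp), abs_neg,
      abs_of_pos hα]
  have hleft : latticeLength (0, 1) (0, 0) = 1 := by
    rw [latticeLength_eq_abs (u := -1) (p := 0) isCoprime_one_right (by ext <;> simp), abs_neg,
      abs_one]
  have hperim : trapPerim α k = 2 + 2 * α + k := by
    rw [trapPerim, hbottom, hslant, htop, hleft]; ring
  ext <;>
  · simp only [trapBdryBary, hperim, trapBdryInt, edgeInt_fst, edgeInt_snd, hbottom, hslant,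
      htop, hleft]
    ring
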